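/- Let H be a complex Hilbert space, 0 ≤ ε < 1/2, and K₁, K₂, K₃, K₄ closed subspaces of H such that Kᵢ and Kⱼ are ε-orthogonal for all i ≠ j in {1,2,3,4}. Then the closure of K₁ + K₂ and the closure of K₃ + K₄ are δ(ε)-orthogonal, where δ(ε) = 2ε/√(1 − ε − √2·ε·√(1 − ε)). -/

import Mathlib

/-!
Splitting `x = x₁ + x₂` with `xᵢ ∈ Kᵢ`, the `ε`-orthogonality of `K₁` and `K₂` gives the reverse
triangle-type bound `(1 - ε) (‖x₁‖ + ‖x₂‖)² ≤ 2 ‖x‖²`, and likewise for `y = y₁ + y₂ ∈ K₃ + K₄`.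
Expanding `⟪x, y⟫` into four cross terms bounds it by `ε (‖x₁‖ + ‖x₂‖) (‖y₁‖ + ‖y₂‖)`, so
`K₁ + K₂` and `K₃ + K₄` are `2ε / (1 - ε)`-orthogonal. This passes to closures by continuity of the
inner product, and `2ε / (1 - ε) ≤ δ(ε)` for `0 ≤ ε < 1/2`.
-/

open scoped ComplexInnerProductSpace InnerProductSpace

section EpsOrthogonal

variable {𝕜 E : Type*} [RCLike 𝕜] [NormedAddCommGroup E] [InnerProductSpace 𝕜 E]

def EpsOrthogonal (ε : ℝ) (K L : Submodule 𝕜 E) : Prop :=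
  ∀ x ∈ K, ∀ y ∈ L, ‖⟪x, y⟫_𝕜‖ ≤ ε * ‖x‖ * ‖y‖

theorem EpsOrthogonal.mono {ε ε' : ℝ} {K L : Submodule 𝕜 E} (h : EpsOrthogonal ε K L)
    (hε : ε ≤ ε') : EpsOrthogonal ε' K L := fun x hx y hy =>
  (h x hx y hy).trans (by gcongr)

theorem EpsOrthogonal.topologicalClosure {ε : ℝ} {K L : Submodule 𝕜 E}
    (h : EpsOrthogonal ε K L) : EpsOrthogonal ε K.topologicalClosure L.topologicalClosure := by
  have hclosed : IsClosed {p : E × E | ‖⟪p.1, p.2⟫_𝕜‖ ≤ ε * ‖p.1‖ * ‖p.2‖} :=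
    isClosed_le (by fun_prop) (by fun_prop)
  intro x hx y hy
  have hxy : (x, y) ∈ closure ((K : Set E) ×ˢ L) := by
    rw [closure_prod_eq]
    exact ⟨hx, hy⟩
  exact closure_minimal (fun p hp => h p.1 hp.1 p.2 hp.2) hclosed hxy

theorem one_sub_mul_sq_norm_add_norm_le {ε : ℝ} (hε : 0 ≤ ε) {a b : E}
    (h : ‖⟪a, b⟫_𝕜‖ ≤ ε * ‖a‖ * ‖b‖) :
    (1 - ε) * (‖a‖ + ‖b‖) ^ 2 ≤ 2 * ‖a + b‖ ^ 2 := by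
  have hre : -(ε * ‖a‖ * ‖b‖) ≤ RCLike.re ⟪a, b⟫_𝕜 :=
    (neg_le_neg h).trans (neg_le_of_abs_le (RCLike.abs_re_le_norm _))
  rw [norm_add_sq (𝕜 := 𝕜)]
  nlinarith [mul_nonneg hε (sq_nonneg (‖a‖ - ‖b‖)), sq_nonneg (‖a‖ - ‖b‖)]

theorem norm_inner_add_add_le {ε : ℝ} {x₁ x₂ y₁ y₂ : E}
    (h₁₁ : ‖⟪x₁, y₁⟫_𝕜‖ ≤ ε * ‖x₁‖ * ‖y₁‖) (h₁₂ : ‖⟪x₁, y₂⟫_𝕜‖ ≤ ε * ‖x₁‖ * ‖y₂‖)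
    (h₂₁ : ‖⟪x₂, y₁⟫_𝕜‖ ≤ ε * ‖x₂‖ * ‖y₁‖) (h₂₂ : ‖⟪x₂, y₂⟫_𝕜‖ ≤ ε * ‖x₂‖ * ‖y₂‖) :
    ‖⟪x₁ + x₂, y₁ + y₂⟫_𝕜‖ ≤ ε * (‖x₁‖ + ‖x₂‖) * (‖y₁‖ + ‖y₂‖) :=
  calc ‖⟪x₁ + x₂, y₁ + y₂⟫_𝕜‖ = ‖⟪x₁, y₁⟫_𝕜 + ⟪x₁, y₂⟫_𝕜 + (⟪x₂, y₁⟫_𝕜 + ⟪x₂, y₂⟫_𝕜)‖ := by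
        rw [inner_add_left, inner_add_right, inner_add_right]
    _ ≤ ‖⟪x₁, y₁⟫_𝕜‖ + ‖⟪x₁, y₂⟫_𝕜‖ + (‖⟪x₂, y₁⟫_𝕜‖ + ‖⟪x₂, y₂⟫_𝕜‖) :=
        (norm_add_le _ _).trans (add_le_add (norm_add_le _ _) (norm_add_le _ _))
    _ ≤ ε * ‖x₁‖ * ‖y₁‖ + ε * ‖x₁‖ * ‖y₂‖ + (ε * ‖x₂‖ * ‖y₁‖ + ε * ‖x₂‖ * ‖y₂‖) :=
        add_le_add (add_le_add h₁₁ h₁₂) (add_le_add h₂₁ h₂₂)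
    _ = ε * (‖x₁‖ + ‖x₂‖) * (‖y₁‖ + ‖y₂‖) := by ring

theorem EpsOrthogonal.sup {ε : ℝ} (hε₀ : 0 ≤ ε) (hε₁ : ε < 1) {K₁ K₂ L₁ L₂ : Submodule 𝕜 E}
    (hK : EpsOrthogonal ε K₁ K₂) (hL : EpsOrthogonal ε L₁ L₂)
    (h₁₁ : EpsOrthogonal ε K₁ L₁) (h₁₂ : EpsOrthogonal ε K₁ L₂)
    (h₂₁ : EpsOrthogonal ε K₂ L₁) (h₂₂ : EpsOrthogonal ε K₂ L₂) :
    EpsOrthogonal (2 * ε / (1 - ε)) (K₁ ⊔ K₂) (L₁ ⊔ L₂) := by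
  rintro _ hx _ hy
  obtain ⟨x₁, hx₁, x₂, hx₂, rfl⟩ := Submodule.mem_sup.mp hx
  obtain ⟨y₁, hy₁, y₂, hy₂, rfl⟩ := Submodule.mem_sup.mp hy
  have h1ε : 0 < 1 - ε := by linarith
  have hinner := norm_inner_add_add_le (h₁₁ x₁ hx₁ y₁ hy₁) (h₁₂ x₁ hx₁ y₂ hy₂)
    (h₂₁ x₂ hx₂ y₁ hy₁) (h₂₂ x₂ hx₂ y₂ hy₂)
  have hx := one_sub_mul_sq_norm_add_norm_le hε₀ (hK x₁ hx₁ x₂ hx₂)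
  have hy := one_sub_mul_sq_norm_add_norm_le hε₀ (hL y₁ hy₁ y₂ hy₂)
  have hprod : (1 - ε) * ((‖x₁‖ + ‖x₂‖) * (‖y₁‖ + ‖y₂‖)) ≤ 2 * (‖x₁ + x₂‖ * ‖y₁ + y₂‖) := by
    refine (pow_le_pow_iff_left₀ (by positivity) (by positivity) two_ne_zero).mp ?_
    calc ((1 - ε) * ((‖x₁‖ + ‖x₂‖) * (‖y₁‖ + ‖y₂‖))) ^ 2
        = ((1 - ε) * (‖x₁‖ + ‖x₂‖) ^ 2) * ((1 - ε) * (‖y₁‖ + ‖y₂‖) ^ 2) := by ring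
      _ ≤ (2 * ‖x₁ + x₂‖ ^ 2) * (2 * ‖y₁ + y₂‖ ^ 2) :=
        mul_le_mul hx hy (by positivity) (by positivity)
      _ = (2 * (‖x₁ + x₂‖ * ‖y₁ + y₂‖)) ^ 2 := by ring
  calc ‖⟪x₁ + x₂, y₁ + y₂⟫_𝕜‖ ≤ ε * (‖x₁‖ + ‖x₂‖) * (‖y₁‖ + ‖y₂‖) := hinner
    _ = ε / (1 - ε) * ((1 - ε) * ((‖x₁‖ + ‖x₂‖) * (‖y₁‖ + ‖y₂‖))) := by
        field_simp
    _ ≤ ε / (1 - ε) * (2 * (‖x₁ + x₂‖ * ‖y₁ + y₂‖)) := by gcongr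
    _ = 2 * ε / (1 - ε) * ‖x₁ + x₂‖ * ‖y₁ + y₂‖ := by ring

end EpsOrthogonal

/-- With `s = √(1 - ε)` the radicand is `s (s - √2 ε)`, which lies in `(0, s⁴]` since
`2ε² < 1 - ε` and `s ≤ 1`. -/
theorem two_mul_div_one_sub_le {ε : ℝ} (hε₀ : 0 ≤ ε) (hε₁ : ε < 1 / 2) :
    2 * ε / (1 - ε) ≤ 2 * ε / Real.sqrt (1 - ε - Real.sqrt 2 * ε * Real.sqrt (1 - ε)) := by
  set s := Real.sqrt (1 - ε)
  have hs2 : s ^ 2 = 1 - ε := Real.sq_sqrt (by linarith)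
  have hs0 : 0 ≤ s := Real.sqrt_nonneg _
  have hs1 : s ≤ 1 := Real.sqrt_le_one.mpr (by linarith)
  have hr2 : Real.sqrt 2 ^ 2 = 2 := Real.sq_sqrt zero_le_two
  have hr0 : 0 ≤ Real.sqrt 2 := Real.sqrt_nonneg _
  have hgap : Real.sqrt 2 * ε < s := by
    refine (pow_lt_pow_iff_left₀ (by positivity) hs0 two_ne_zero).mp ?_
    rw [mul_pow, hr2, hs2]
    nlinarith
  have hrad : 1 - ε - Real.sqrt 2 * ε * s = s * (s - Real.sqrt 2 * ε) := by
    rw [← hs2]; ring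
  have hpos : 0 < Real.sqrt (1 - ε - Real.sqrt 2 * ε * s) := by
    rw [Real.sqrt_pos, hrad]
    exact mul_pos (hgap.trans_le' (by positivity)) (by linarith)
  have hle : Real.sqrt (1 - ε - Real.sqrt 2 * ε * s) ≤ 1 - ε := by
    rw [Real.sqrt_le_iff, hrad, ← hs2]
    refine ⟨by positivity, ?_⟩
    have hs_le : s ≤ Real.sqrt 2 := hs1.trans (Real.one_le_sqrt.mpr one_le_two)
    nlinarith [mul_nonneg (mul_nonneg hε₀ hs0) (sub_nonneg.mpr hs_le)]
  gcongr

theorem epsilon_orthogonal_sup_of_four_general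
    {H : Type*} [NormedAddCommGroup H] [InnerProductSpace ℂ H]
    (ε : ℝ) (hε₀ : 0 ≤ ε) (hε₁ : ε < 1 / 2)
    (K : Fin 4 → Submodule ℂ H)
    (horth : ∀ i j, i ≠ j → ∀ ξ ∈ K i, ∀ η ∈ K j, ‖⟪ξ, η⟫‖ ≤ ε * ‖ξ‖ * ‖η‖) :
    ∀ ξ ∈ (K 0 ⊔ K 1 : Submodule ℂ H).topologicalClosure,
      ∀ η ∈ (K 2 ⊔ K 3 : Submodule ℂ H).topologicalClosure,
        ‖⟪ξ, η⟫‖ ≤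
          2 * ε / Real.sqrt (1 - ε - Real.sqrt 2 * ε * Real.sqrt (1 - ε)) * ‖ξ‖ * ‖η‖ := by
  have hsup : EpsOrthogonal (2 * ε / (1 - ε)) (K 0 ⊔ K 1) (K 2 ⊔ K 3) :=
    EpsOrthogonal.sup hε₀ (by linarith) (horth 0 1 (by decide)) (horth 2 3 (by decide))
      (horth 0 2 (by decide)) (horth 0 3 (by decide)) (horth 1 2 (by decide))
      (horth 1 3 (by decide))
  exact hsup.topologicalClosure.mono (two_mul_div_one_sub_le hε₀ hε₁)

/-- If `K₁, K₂, K₃, K₄` are pairwise `ε`-orthogonal closed subspaces of a complex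
Hilbert space with `0 ≤ ε < 1/2`, then the closure of `K₁ + K₂` and the closure of
`K₃ + K₄` are `δ(ε)`-orthogonal, where `δ(ε) = 2ε / √(1 - ε - √2 ε √(1 - ε))`. -/
theorem epsilon_orthogonal_sup_of_four
    {H : Type*} [NormedAddCommGroup H] [InnerProductSpace ℂ H] [CompleteSpace H]
    (ε : ℝ) (hε₀ : 0 ≤ ε) (hε₁ : ε < 1 / 2)
    (K : Fin 4 → Submodule ℂ H)
    (hK : ∀ i, IsClosed ((K i : Set H)))
    (horth : ∀ i j, i ≠ j → ∀ ξ ∈ K i, ∀ η ∈ K j, ‖⟪ξ, η⟫‖ ≤ ε * ‖ξ‖ * ‖η‖) :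
    ∀ ξ ∈ (K 0 ⊔ K 1 : Submodule ℂ H).topologicalClosure,
      ∀ η ∈ (K 2 ⊔ K 3 : Submodule ℂ H).topologicalClosure,
        ‖⟪ξ, η⟫‖ ≤
          2 * ε / Real.sqrt (1 - ε - Real.sqrt 2 * ε * Real.sqrt (1 - ε)) * ‖ξ‖ * ‖η‖ :=
  epsilon_orthogonal_sup_of_four_general ε hε₀ hε₁ K horth
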